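/- Let A, B, D be linear maps on ℂⁿ ⊗ ℂⁿ with A invertible, satisfying A₁₂ B₁₃ D₂₃ = D₂₃ B₁₃ A₁₂ on ℂⁿ ⊗ ℂⁿ ⊗ ℂⁿ, and let C be the cyclic shift on (ℂⁿ)^{⊗N}. Then the operator T := C⁻¹ ∘ t(B) commutes with t(D), and consequently every power T^L (L ≥ 1) commutes with t(D). (This expresses that the trace of the T-operators gives an infinite set of quantities conserved by the evolution operator of an integrable quantum spin chain.) -/

import Mathlib

/-!
Operators are represented by their matrices in the standard product bases
(output index first, so matrix multiplication is composition).

Every entry of a transfer matrix is a cyclic trace `Σ_b ∏_k F_k (b_{k+1}, b_k)` of operators on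
the auxiliary space. An entry of `t(B) t(D)` is then a cyclic trace of operators on two auxiliary
spaces, and the relation `A₁₂ B₁₃ D₂₃ = D₂₃ B₁₃ A₁₂`, read with the third factor as the quantum
site, says that conjugation by `A` turns each of them into the corresponding operator for
`t(D) t(B)` (with the two auxiliary spaces swapped). Since `A` is invertible, it can be slid once
around the cyclic trace and cancelled, so `t(B)` and `t(D)` commute. The shift `C` is the
permutation matrix of a translation of `ℤ/N`, under which transfer matrices are invariant, so
`C⁻¹` commutes with `t(D)` as well, and hence so do `T = C⁻¹ t(B)` and its powers.
-/

open Complex Matrix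

/-- `X ⊗ id` acting on the first two factors of ℂⁿ ⊗ ℂⁿ ⊗ ℂⁿ. -/
noncomputable def leg12 {n : ℕ} (R : Matrix (Fin n × Fin n) (Fin n × Fin n) ℂ) :
    Matrix (Fin n × Fin n × Fin n) (Fin n × Fin n × Fin n) ℂ :=
  fun p q => R (p.1, p.2.1) (q.1, q.2.1) * (if p.2.2 = q.2.2 then 1 else 0)

/-- `id ⊗ X` acting on the last two factors of ℂⁿ ⊗ ℂⁿ ⊗ ℂⁿ. -/
noncomputable def leg23 {n : ℕ} (R : Matrix (Fin n × Fin n) (Fin n × Fin n) ℂ) :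
    Matrix (Fin n × Fin n × Fin n) (Fin n × Fin n × Fin n) ℂ :=
  fun p q => (if p.1 = q.1 then 1 else 0) * R (p.2.1, p.2.2) (q.2.1, q.2.2)

/-- `X` acting on the first and third factors of ℂⁿ ⊗ ℂⁿ ⊗ ℂⁿ. -/
noncomputable def leg13 {n : ℕ} (R : Matrix (Fin n × Fin n) (Fin n × Fin n) ℂ) :
    Matrix (Fin n × Fin n × Fin n) (Fin n × Fin n × Fin n) ℂ :=
  fun p q => R (p.1, p.2.2) (q.1, q.2.2) * (if p.2.1 = q.2.1 then 1 else 0)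

/-- The transfer matrix `t(R)` on (ℂⁿ)^{⊗N}, with entries
`t_{i₁⋯i_N}^{j₁⋯j_N} = Σ_b ∏_k R_{(b_k, i_k)}^{(b_{k+1}, j_k)}` (indices mod N);
here `R (b,j) (a,i) = R_{(a,i)}^{(b,j)}` (output index first). -/
noncomputable def transfer {n : ℕ} (N : ℕ) [NeZero N]
    (R : Matrix (Fin n × Fin n) (Fin n × Fin n) ℂ) :
    Matrix (ZMod N → Fin n) (ZMod N → Fin n) ℂ :=
  fun j i => ∑ b : ZMod N → Fin n, ∏ k : ZMod N, R (b (k + 1), j k) (b k, i k)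

/-- The cyclic shift operator `C(e_{j₁} ⊗ ⋯ ⊗ e_{j_N}) = e_{j₂} ⊗ ⋯ ⊗ e_{j_N} ⊗ e_{j₁}`. -/
noncomputable def cyc {n : ℕ} (N : ℕ) [NeZero N] :
    Matrix (ZMod N → Fin n) (ZMod N → Fin n) ℂ :=
  fun g j => if g = (fun k => j (k + 1)) then 1 else 0

open scoped Kronecker

section CyclicTrace

variable {R α β ι : Type*} [CommSemiring R] [Fintype α] [Fintype β] (N : ℕ) [NeZero N]

/-- `cyclicTrace N F = trace (F (N - 1) * ⋯ * F 1 * F 0)`. -/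
def cyclicTrace (F : ZMod N → Matrix α α R) : R :=
  ∑ b : ZMod N → α, ∏ k, F k (b (k + 1)) (b k)

theorem cyclicTrace_comp_add (F : ZMod N → Matrix α α R) (c : ZMod N) :
    cyclicTrace N (fun k => F (k + c)) = cyclicTrace N F :=
  Fintype.sum_equiv ((Equiv.addRight c).arrowCongr (Equiv.refl α)) _ _ fun b =>
    Fintype.prod_equiv (Equiv.addRight c) _ _ fun k => by simp [add_right_comm]

theorem cyclicTrace_submatrix_equiv (F : ZMod N → Matrix α α R) (e : β ≃ α) :
    cyclicTrace N (fun k => (F k).submatrix e e) = cyclicTrace N F :=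
  Fintype.sum_equiv (Equiv.piCongrRight fun _ => e) _ _ fun _ => rfl

theorem cyclicTrace_mul_cyclicTrace (F : ZMod N → Matrix α α R) (G : ZMod N → Matrix β β R) :
    cyclicTrace N F * cyclicTrace N G = cyclicTrace N (fun k => F k ⊗ₖ G k) := by
  rw [cyclicTrace, cyclicTrace, Finset.sum_mul_sum, ← Fintype.sum_prod_type']
  refine Fintype.sum_equiv (Equiv.arrowProdEquivProdArrow _ _ _).symm _ _ fun b => ?_
  simp [kroneckerMap_apply, Finset.prod_mul_distrib]

theorem sum_cyclicTrace [Fintype ι] (H : ZMod N → ι → Matrix α α R) :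
    ∑ m : ZMod N → ι, cyclicTrace N (fun k => H k (m k)) =
      cyclicTrace N (fun k => ∑ i, H k i) := by
  simp only [cyclicTrace, Matrix.sum_apply, Finset.prod_univ_sum, Fintype.piFinset_univ]
  exact Finset.sum_comm

theorem cyclicTrace_mul_eq_sum (F G : ZMod N → Matrix α α R) :
    cyclicTrace N (fun k => F k * G k) =
      ∑ b : ZMod N → α, ∑ c : ZMod N → α, ∏ k, F k (b (k + 1)) (c k) * G k (c k) (b k) := by
  simp only [cyclicTrace, Matrix.mul_apply, Finset.prod_univ_sum, Fintype.piFinset_univ]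

theorem cyclicTrace_mul_comm_shift (M F : ZMod N → Matrix α α R) :
    cyclicTrace N (fun k => M k * F k) = cyclicTrace N (fun k => F (k + 1) * M k) := by
  rw [cyclicTrace_mul_eq_sum, cyclicTrace_mul_eq_sum, ← Fintype.sum_prod_type',
    ← Fintype.sum_prod_type']
  refine Fintype.sum_equiv ((Equiv.prodComm _ _).trans
    ((Equiv.refl _).prodCongr ((Equiv.subRight 1).arrowCongr (Equiv.refl α)))) _ _ fun p => ?_
  rw [Finset.prod_mul_distrib, Finset.prod_mul_distrib, mul_comm]
  congr 1
  exact Fintype.prod_equiv (Equiv.subRight 1) _ _ fun k => by simp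

theorem cyclicTrace_eq_of_conj [DecidableEq α] (M : (Matrix α α R)ˣ) {F G : ZMod N → Matrix α α R}
    (h : ∀ k, (M : Matrix α α R) * F k = G k * (M : Matrix α α R)) :
    cyclicTrace N F = cyclicTrace N G :=
  calc cyclicTrace N F
      = cyclicTrace N (fun k => (↑M⁻¹ : Matrix α α R) * (G k * (M : Matrix α α R))) := by
        simp_rw [← h, Units.inv_mul_cancel_left]
    _ = cyclicTrace N (fun k => G (k + 1) * (M : Matrix α α R) * (↑M⁻¹ : Matrix α α R)) :=
        cyclicTrace_mul_comm_shift N _ _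
    _ = cyclicTrace N (fun k => G (k + 1)) := by simp_rw [Units.mul_inv_cancel_right]
    _ = cyclicTrace N G := cyclicTrace_comp_add N G 1

end CyclicTrace

section Transfer

variable {n : ℕ} (N : ℕ) [NeZero N]

theorem transfer_apply (X : Matrix (Fin n × Fin n) (Fin n × Fin n) ℂ) (j i : ZMod N → Fin n) :
    transfer N X j i = cyclicTrace N fun k => X.submatrix (·, j k) (·, i k) :=
  rfl

theorem transfer_mul_transfer_apply (X Y : Matrix (Fin n × Fin n) (Fin n × Fin n) ℂ)
    (j i : ZMod N → Fin n) :
    (transfer N X * transfer N Y) j i =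
      cyclicTrace N fun k => ∑ m, X.submatrix (·, j k) (·, m) ⊗ₖ Y.submatrix (·, m) (·, i k) := by
  simp only [← sum_cyclicTrace, mul_apply, transfer_apply, cyclicTrace_mul_cyclicTrace]

theorem mul_sum_kronecker_of_yangBaxter {A B D : Matrix (Fin n × Fin n) (Fin n × Fin n) ℂ}
    (hYB : leg12 A * leg13 B * leg23 D = leg23 D * leg13 B * leg12 A) (j i : Fin n) :
    A * ∑ m, B.submatrix (·, j) (·, m) ⊗ₖ D.submatrix (·, m) (·, i) =
      (∑ m, B.submatrix (·, m) (·, i) ⊗ₖ D.submatrix (·, j) (·, m)) * A := by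
  ext ⟨p₁, p₂⟩ ⟨q₁, q₂⟩
  have h := congr_fun (congr_fun hYB (p₁, p₂, j)) (q₁, q₂, i)
  simp only [mul_apply, leg12, leg13, leg23, Fintype.sum_prod_type, ite_mul, mul_ite, one_mul,
    mul_one, zero_mul, mul_zero, Finset.sum_ite_eq, Finset.sum_ite_eq', Finset.sum_ite_irrel,
    Finset.sum_const_zero, Finset.mem_univ, if_true, Finset.sum_mul] at h
  simp only [mul_apply, Matrix.sum_apply, kronecker_apply, submatrix_apply, Fintype.sum_prod_type,
    Finset.mul_sum, Finset.sum_mul]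
  convert h using 1
  · rw [Finset.sum_comm]
    exact Finset.sum_congr rfl fun _ _ => by rw [Finset.sum_comm]; simp only [mul_assoc]
  · simp only [mul_comm (D _ _)]

theorem commute_transfer_of_yangBaxter {A B D : Matrix (Fin n × Fin n) (Fin n × Fin n) ℂ}
    (hA : IsUnit A) (hYB : leg12 A * leg13 B * leg23 D = leg23 D * leg13 B * leg12 A) :
    Commute (transfer N B) (transfer N D) := by
  obtain ⟨u, rfl⟩ := hA
  refine Matrix.ext fun j i => ?_
  rw [transfer_mul_transfer_apply, transfer_mul_transfer_apply,
    cyclicTrace_eq_of_conj N u fun k => mul_sum_kronecker_of_yangBaxter hYB (j k) (i k),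
    ← cyclicTrace_submatrix_equiv N _ (Equiv.prodComm _ _)]
  congr 1
  funext k
  ext
  simp [Matrix.sum_apply, mul_comm]

theorem transfer_apply_comp_sub_one (X : Matrix (Fin n × Fin n) (Fin n × Fin n) ℂ)
    (j i : ZMod N → Fin n) :
    transfer N X (fun k => j (k - 1)) (fun k => i (k - 1)) = transfer N X j i := by
  simpa only [transfer_apply, sub_eq_add_neg] using
    cyclicTrace_comp_add N (fun k => X.submatrix (·, j k) (·, i k)) (-1)

def cycPerm (α : Type*) : (ZMod N → α) ≃ (ZMod N → α) where
  toFun j k := j (k - 1)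
  invFun j k := j (k + 1)
  left_inv j := by simp
  right_inv j := by simp

theorem cyc_eq_toMatrix_cycPerm : cyc (n := n) N = (cycPerm N (Fin n)).toPEquiv.toMatrix := by
  ext g j
  simp only [cyc, PEquiv.toMatrix_apply, Equiv.toPEquiv_apply, Option.mem_def, Option.some.injEq]
  congr 1
  simp only [cycPerm, Equiv.coe_fn_mk, funext_iff, eq_iff_iff]
  exact ⟨fun h k => by simpa using h (k - 1), fun h k => by simpa using h (k + 1)⟩

theorem commute_cyc_transfer (X : Matrix (Fin n × Fin n) (Fin n × Fin n) ℂ) :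
    Commute (cyc N) (transfer N X) := by
  rw [cyc_eq_toMatrix_cycPerm]
  refine (PEquiv.toMatrix_toPEquiv_mul _ _).trans
    (.trans ?_ (PEquiv.mul_toMatrix_toPEquiv _ _).symm)
  ext j i
  rw [submatrix_apply, submatrix_apply, id, id, ← transfer_apply_comp_sub_one N X j]
  simp [cycPerm]

end Transfer

theorem Toperator_powers_commute_with_transfer {n : ℕ}
    (A B D : Matrix (Fin n × Fin n) (Fin n × Fin n) ℂ)
    (hA : IsUnit A)
    (hYB : leg12 A * leg13 B * leg23 D = leg23 D * leg13 B * leg12 A)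
    (N : ℕ) [NeZero N]
    (T : Matrix (ZMod N → Fin n) (ZMod N → Fin n) ℂ)
    (hT : T = (cyc N)⁻¹ * transfer N B) :
    T * transfer N D = transfer N D * T ∧
      ∀ L : ℕ, 1 ≤ L → T ^ L * transfer N D = transfer N D * T ^ L := by
  have hC : Commute (cyc N)⁻¹ (transfer N D) := by
    simpa only [Matrix.zpow_neg_one] using Matrix.Commute.zpow_left (commute_cyc_transfer N D) (-1)
  have hTD : Commute T (transfer N D) := hT ▸ hC.mul_left (commute_transfer_of_yangBaxter N hA hYB)
  exact ⟨hTD.eq, fun L _ => (hTD.pow_left L).eq⟩
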